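/- arXiv:2402.06103 — 7 statements merged into one kernel-verified Lean document; each statement's English description precedes it below -/
import Mathlib

section
/- Let m ≥ 1 and t_0 < t_1 < ... < t_m be real numbers, and let g be a function defined at these points such that (-1)^{m-i}(g(t_i) - g(t_{i-1})) ≥ 0 for all 1 ≤ i ≤ m. Then the divided difference [t_0, t_1, ..., t_m; g] is nonnegative. -/
/-!
Divided differences are linear in the data. By Abel summation, on the knots `g` equals
`g t₀ + ∑ₖ (g tₖ - g tₖ₋₁) • 1_[tₖ, ∞)`, and the constant term contributes nothing in order `m ≥ 1`.
The recurrence `(b - a) [s; f] = [s \ {a}; f] - [s \ {b}; f]` for `a = min s`, `b = max s` shows by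
induction that `[s; 1_[c, ∞)]` has the sign `(-1) ^ #{x ∈ s | c < x}` for every knot `c ∈ s`; for
`c = tₖ` this is exactly the sign of the coefficient `g tₖ - g tₖ₋₁`, so every term is nonnegative.
-/

open Finset

/-- Divided difference of order `m` of `g` at knots `t 0, …, t m`. -/
noncomputable def divDiff (m : ℕ) (t : ℕ → ℝ) (g : ℝ → ℝ) : ℝ :=
  ∑ i ∈ Finset.range (m + 1),
    g (t i) / ∏ j ∈ (Finset.range (m + 1)).erase i, (t i - t j)

section Field

variable {K : Type*} [Field K] [DecidableEq K]

/-- `[s; f]`, the divided difference of `f` at the knot set `s`. -/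
def divDiffOn (s : Finset K) : (K → K) →ₗ[K] K where
  toFun f := ∑ x ∈ s, f x / ∏ y ∈ s.erase x, (x - y)
  map_add' f g := by simp only [Pi.add_apply, add_div, sum_add_distrib]
  map_smul' a f := by
    simp only [Pi.smul_apply, smul_eq_mul, mul_div_assoc, mul_sum, RingHom.id_apply]

variable {s : Finset K} {f g : K → K}

lemma divDiffOn_apply (s : Finset K) (f : K → K) :
    divDiffOn s f = ∑ x ∈ s, f x / ∏ y ∈ s.erase x, (x - y) := rfl

lemma divDiffOn_congr (h : Set.EqOn f g s) : divDiffOn s f = divDiffOn s g :=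
  sum_congr rfl fun x hx => by rw [h hx]

@[simp]
lemma divDiffOn_singleton (a : K) (f : K → K) : divDiffOn {a} f = f a := by
  simp [divDiffOn_apply]

lemma divDiffOn_erase {a : K} (ha : a ∈ s) (f : K → K) :
    divDiffOn (s.erase a) f = ∑ x ∈ s, f x * (x - a) / ∏ y ∈ s.erase x, (x - y) := by
  rw [← add_sum_erase s _ ha, sub_self, mul_zero, zero_div, zero_add, divDiffOn_apply]
  refine sum_congr rfl fun x hx => ?_
  have hxa : x - a ≠ 0 := sub_ne_zero.mpr (ne_of_mem_erase hx)
  rw [← mul_prod_erase (s.erase x) _ (mem_erase.mpr ⟨(ne_of_mem_erase hx).symm, ha⟩),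
    erase_right_comm, mul_comm (f x), mul_div_mul_left _ _ hxa]

lemma sub_mul_divDiffOn {a b : K} (ha : a ∈ s) (hb : b ∈ s) (f : K → K) :
    (b - a) * divDiffOn s f = divDiffOn (s.erase a) f - divDiffOn (s.erase b) f := by
  rw [divDiffOn_erase ha, divDiffOn_erase hb, ← sum_sub_distrib, divDiffOn_apply, mul_sum]
  refine sum_congr rfl fun x _ => ?_
  ring

lemma divDiffOn_const (hs : 1 < #s) (c : K) : divDiffOn s (fun _ => c) = 0 := by
  induction s using Finset.strongInduction with
  | H s ih =>
  obtain ⟨a, ha, b, hb, hab⟩ := one_lt_card.mp hs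
  have hba : b - a ≠ 0 := sub_ne_zero.mpr hab.symm
  have h_erase : divDiffOn (s.erase a) (fun _ => c) = divDiffOn (s.erase b) (fun _ => c) := by
    rcases Nat.lt_or_ge 2 #s with h | h
    · rw [ih _ (erase_ssubset ha) (by rw [card_erase_of_mem ha]; omega),
        ih _ (erase_ssubset hb) (by rw [card_erase_of_mem hb]; omega)]
    · obtain ⟨x, hx⟩ := card_eq_one.mp (by rw [card_erase_of_mem ha]; omega)
      obtain ⟨y, hy⟩ := card_eq_one.mp (by rw [card_erase_of_mem hb]; omega)
      rw [hx, hy, divDiffOn_singleton, divDiffOn_singleton]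
  have := sub_mul_divDiffOn ha hb (fun _ => c)
  rwa [h_erase, sub_self, mul_eq_zero, or_iff_right hba] at this

end Field

theorem neg_one_pow_mul_divDiffOn_indicator_Ici_nonneg {K : Type*} [Field K] [LinearOrder K]
    [IsStrictOrderedRing K] {s : Finset K} {c : K} (hc : c ∈ s) :
    0 ≤ (-1) ^ #{x ∈ s | c < x} * divDiffOn s ((Set.Ici c).indicator 1) := by
  induction s using Finset.strongInduction with
  | H s ih =>
  set H : K → K := (Set.Ici c).indicator 1
  rcases eq_singleton_or_nontrivial hc with rfl | hs
  · simp [H, filter_singleton]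
  obtain ⟨a, ha, ha_min⟩ : ∃ a ∈ s, ∀ x ∈ s, a ≤ x := ⟨s.min' ⟨c, hc⟩, min'_mem s _, min'_le s⟩
  obtain ⟨b, hb, hb_max⟩ : ∃ b ∈ s, ∀ x ∈ s, x ≤ b := ⟨s.max' ⟨c, hc⟩, max'_mem s _, le_max' s⟩
  rcases (ha_min c hc).eq_or_lt with rfl | hac
  · have h_one : Set.EqOn H (fun _ => 1) s := fun x hx => by simp [H, ha_min x hx]
    rw [divDiffOn_congr h_one, divDiffOn_const (one_lt_card_iff_nontrivial.mpr hs), mul_zero]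
  have hA : 0 ≤ (-1) ^ #{x ∈ s | c < x} * divDiffOn (s.erase a) H := by
    have := ih _ (erase_ssubset ha) (mem_erase.mpr ⟨hac.ne', hc⟩)
    rwa [filter_erase, erase_eq_of_notMem (by simp [hac.le])] at this
  have hB : 0 ≤ -((-1) ^ #{x ∈ s | c < x} * divDiffOn (s.erase b) H) := by
    rcases (hb_max c hc).eq_or_lt with rfl | hcb
    · have h_zero : Set.EqOn H 0 (s.erase c) := fun x hx =>
        by simp [H, (hb_max x (mem_of_mem_erase hx)).lt_of_ne (ne_of_mem_erase hx)]
      rw [divDiffOn_congr h_zero, map_zero, mul_zero, neg_zero]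
    have := ih _ (erase_ssubset hb) (mem_erase.mpr ⟨hcb.ne, hc⟩)
    have h_card : #{x ∈ s | c < x} = #{x ∈ s.erase b | c < x} + 1 := by
      rw [filter_erase, card_erase_add_one (by simp [hb, hcb])]
    rw [h_card, pow_succ]
    linarith
  have hab : 0 < b - a := sub_pos.mpr (hac.trans_le (hb_max c hc))
  refine (mul_nonneg_iff_of_pos_left hab).mp ?_
  rw [mul_left_comm, sub_mul_divDiffOn ha hb]
  linarith

section Knots

variable {K : Type*} [LinearOrder K] {t : ℕ → K} {m : ℕ}

lemma eqOn_add_sum_smul_indicator_Ici {R : Type*} [Ring R] (ht : StrictMonoOn t (Set.Iic m))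
    (g : K → R) :
    Set.EqOn g ((fun _ => g (t 0)) +
        ∑ k ∈ range m, (g (t (k + 1)) - g (t k)) • (Set.Ici (t (k + 1))).indicator 1)
      ((range (m + 1)).image t) := by
  rintro _ hx
  obtain ⟨i, hi, rfl⟩ := mem_image.mp hx
  have hi : i ≤ m := Nat.lt_succ_iff.mp (mem_range.mp hi)
  have h_step : ∀ k ∈ range m, (g (t (k + 1)) - g (t k)) * (Set.Ici (t (k + 1))).indicator 1 (t i)
      = if k < i then g (t (k + 1)) - g (t k) else 0 := by
    intro k hk
    have hk : k + 1 ≤ m := mem_range.mp hk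
    simp [Set.indicator_apply, ht.le_iff_le (Set.mem_Iic.mpr hk) (Set.mem_Iic.mpr hi)]
  have h_range : {k ∈ range m | k < i} = range i := by
    ext k; simp only [mem_filter, mem_range]; omega
  simp only [Pi.add_apply, Finset.sum_apply, Pi.smul_apply, smul_eq_mul]
  rw [sum_congr rfl h_step, ← sum_filter, h_range, ← eq_sum_range_sub (fun i => g (t i))]

lemma card_filter_lt_image_range (ht : StrictMonoOn t (Set.Iic m)) {i : ℕ} (hi : i ≤ m) :
    #{x ∈ (range (m + 1)).image t | t i < x} = m - i := by
  have h : {x ∈ (range (m + 1)).image t | t i < x} = (Ioc i m).image t := by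
    ext x
    simp only [mem_filter, mem_image, mem_range, mem_Ioc]
    constructor
    · rintro ⟨⟨j, hj, rfl⟩, hij⟩
      have hji : i < j := (ht.lt_iff_lt (Set.mem_Iic.mpr hi) (Set.mem_Iic.mpr (by omega))).mp hij
      exact ⟨j, ⟨hji, by omega⟩, rfl⟩
    · rintro ⟨j, ⟨hij, hj⟩, rfl⟩
      exact ⟨⟨j, by omega, rfl⟩, ht (Set.mem_Iic.mpr hi) (Set.mem_Iic.mpr hj) hij⟩
  rw [h, card_image_of_injOn (ht.injOn.mono fun j hj => Set.mem_Iic.mpr (mem_Ioc.mp hj).2),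
    Nat.card_Ioc]

end Knots

lemma divDiff_eq_divDiffOn {m : ℕ} {t : ℕ → ℝ} (ht : Set.InjOn t (range (m + 1))) (g : ℝ → ℝ) :
    divDiff m t g = divDiffOn ((range (m + 1)).image t) g := by
  rw [divDiffOn_apply, sum_image ht]
  refine sum_congr rfl fun i hi => ?_
  have h_erase : ((range (m + 1)).image t).erase (t i) = ((range (m + 1)).erase i).image t := by
    ext y
    simp only [mem_erase, mem_image]
    constructor
    · rintro ⟨hy, j, hj, rfl⟩
      exact ⟨j, ⟨fun hji => hy (hji ▸ rfl), hj⟩, rfl⟩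
    · rintro ⟨j, ⟨hji, hj⟩, rfl⟩
      exact ⟨fun h => hji (ht hj hi h), j, hj, rfl⟩
  rw [h_erase, prod_image (ht.mono (coe_subset.mpr (erase_subset i _)))]

lemma mul_nonneg_of_neg_one_pow_mul_nonneg {R : Type*} [CommRing R] [PartialOrder R]
    [IsOrderedRing R] {a b : R} (n : ℕ) (ha : 0 ≤ (-1) ^ n * a) (hb : 0 ≤ (-1) ^ n * b) :
    0 ≤ a * b := by
  have := mul_nonneg ha hb
  rwa [mul_mul_mul_comm, ← mul_pow, neg_one_mul, neg_neg, one_pow, one_mul] at this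

theorem stmt0 (m : ℕ) (hm : 1 ≤ m) (t : ℕ → ℝ) (g : ℝ → ℝ)
    (ht : ∀ i < m, t i < t (i + 1))
    (hg : ∀ i, 1 ≤ i → i ≤ m → 0 ≤ (-1 : ℝ) ^ (m - i) * (g (t i) - g (t (i - 1)))) :
    0 ≤ divDiff m t g := by
  have h_mono : StrictMonoOn t (Set.Iic m) := strictMonoOn_Iic_of_lt_succ ht
  have h_inj : Set.InjOn t (range (m + 1)) :=
    h_mono.injOn.mono fun i hi => Set.mem_Iic.mpr (Nat.lt_succ_iff.mp (mem_range.mp hi))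
  have h_card : 1 < #((range (m + 1)).image t) := by
    rw [card_image_of_injOn h_inj, card_range]; omega
  rw [divDiff_eq_divDiffOn h_inj, divDiffOn_congr (eqOn_add_sum_smul_indicator_Ici h_mono g),
    map_add, divDiffOn_const h_card, zero_add, map_sum]
  refine sum_nonneg fun k hk => ?_
  have hk : k + 1 ≤ m := mem_range.mp hk
  rw [map_smul, smul_eq_mul]
  refine mul_nonneg_of_neg_one_pow_mul_nonneg (m - (k + 1)) ?_ ?_
  · simpa using hg (k + 1) (Nat.le_add_left 1 k) hk
  · rw [← card_filter_lt_image_range h_mono hk]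
    exact neg_one_pow_mul_divDiffOn_indicator_Ici_nonneg (mem_image_of_mem t (by simpa using hk))
end

section
/- Let m ≥ 2 and t_0 < t_1 < ... < t_m be real numbers, and let g be defined at these points and satisfy (-1)^{m-i}(g(t_i) - g(t_{i-1})) ≥ 0 for all 1 ≤ i ≤ m. Then |[t_0, ..., t_m; g]| = ( |[t_1, ..., t_m; g]| + |[t_0, ..., t_{m-1}; g]| ) / (t_m - t_0). -/
/-!
Divided differences satisfy `[t₀,…,t_m] = ([t₁,…,t_m] - [t₀,…,t_{m-1}]) / (t_m - t₀)`.
Under the sign condition every divided difference of order `k ≥ 1` is nonnegative, by induction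
through the same recurrence: the tail `t₁,…,t_k` inherits the sign pattern of the increments, and
the head `t₀,…,t_{k-1}` inherits it for `-g`. Hence the two lower-order differences in the recurrence
have opposite signs, and the absolute value of their difference is the sum of their absolute values.
-/

open Finset

lemma prod_erase_range_add_two_succ {M : Type*} [CommMonoid M] (f : ℕ → M) (k i : ℕ) :
    ∏ j ∈ (range (k + 2)).erase (i + 1), f j = f 0 * ∏ j ∈ (range (k + 1)).erase i, f (j + 1) := by
  rw [range_add_one' (k + 1), erase_insert_of_ne (by omega), prod_insert (by simp)]
  erw [← map_erase, prod_map]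
  rfl

lemma prod_erase_range_add_two_of_ne {M : Type*} [CommMonoid M] (f : ℕ → M) {k i : ℕ}
    (hi : i ≠ k + 1) :
    ∏ j ∈ (range (k + 2)).erase i, f j = f (k + 1) * ∏ j ∈ (range (k + 1)).erase i, f j := by
  rw [range_add_one, erase_insert_of_ne hi.symm, prod_insert (by simp)]

section DividedDifference

variable {k : ℕ} {t : ℕ → ℝ} (g : ℝ → ℝ)

lemma divDiff_zero : divDiff 0 t g = g (t 0) := by
  simp [divDiff]

lemma divDiff_neg : divDiff k t (fun x => -g x) = -divDiff k t g := by
  simp only [divDiff, neg_div, sum_neg_distrib]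

lemma divDiff_shift_eq_sum (ht : Set.InjOn t (Set.Iic (k + 1))) :
    divDiff k (fun i => t (i + 1)) g =
      ∑ i ∈ range (k + 2), (t i - t 0) * g (t i) / ∏ j ∈ (range (k + 2)).erase i, (t i - t j) := by
  rw [sum_range_succ']
  simp only [sub_self, zero_mul, zero_div, add_zero, divDiff]
  refine sum_congr rfl fun i hi => ?_
  have h0 : t (i + 1) - t 0 ≠ 0 :=
    sub_ne_zero.2 fun h => by simpa using ht (by simp at hi ⊢; omega) (by simp) h
  rw [prod_erase_range_add_two_succ, mul_div_mul_left _ _ h0]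

lemma divDiff_eq_sum_mul_sub_last (ht : Set.InjOn t (Set.Iic (k + 1))) :
    divDiff k t g =
      ∑ i ∈ range (k + 2), (t i - t (k + 1)) * g (t i) /
        ∏ j ∈ (range (k + 2)).erase i, (t i - t j) := by
  rw [sum_range_succ]
  simp only [sub_self, zero_mul, zero_div, add_zero, divDiff]
  refine sum_congr rfl fun i hi => ?_
  have hik : i ≠ k + 1 := by simp at hi; omega
  have hlast : t i - t (k + 1) ≠ 0 :=
    sub_ne_zero.2 fun h => hik (ht (by simp at hi ⊢; omega) (by simp) h)
  rw [prod_erase_range_add_two_of_ne _ hik, mul_div_mul_left _ _ hlast]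

theorem divDiff_succ (ht : Set.InjOn t (Set.Iic (k + 1))) :
    divDiff (k + 1) t g =
      (divDiff k (fun i => t (i + 1)) g - divDiff k t g) / (t (k + 1) - t 0) := by
  have hne : t (k + 1) - t 0 ≠ 0 :=
    sub_ne_zero.2 fun h => by simpa using ht (by simp) (by simp) h
  rw [eq_div_iff hne, divDiff_shift_eq_sum g ht, divDiff_eq_sum_mul_sub_last g ht,
    ← sum_sub_distrib, divDiff, sum_mul]
  refine sum_congr rfl fun i _ => ?_
  ring

end DividedDifference

def HasAlternatingIncrements (k : ℕ) (t : ℕ → ℝ) (g : ℝ → ℝ) : Prop :=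
  ∀ i, 1 ≤ i → i ≤ k → 0 ≤ (-1 : ℝ) ^ (k - i) * (g (t i) - g (t (i - 1)))

namespace HasAlternatingIncrements

variable {k : ℕ} {t : ℕ → ℝ} {g : ℝ → ℝ}

lemma shift (h : HasAlternatingIncrements (k + 1) t g) :
    HasAlternatingIncrements k (fun i => t (i + 1)) g := by
  intro i hi1 hik
  have := h (i + 1) (by omega) (by omega)
  rw [Nat.add_sub_add_right, Nat.add_sub_cancel] at this
  simpa only [Nat.sub_add_cancel hi1] using this

lemma neg_init (h : HasAlternatingIncrements (k + 1) t g) :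
    HasAlternatingIncrements k t (fun x => -g x) := by
  intro i hi1 hik
  have := h i hi1 (by omega)
  rw [Nat.sub_add_comm hik, pow_succ] at this
  linarith

end HasAlternatingIncrements

theorem divDiff_nonneg_of_hasAlternatingIncrements {k : ℕ} (hk : 1 ≤ k) {t : ℕ → ℝ}
    (ht : ∀ i < k, t i < t (i + 1)) {g : ℝ → ℝ} (hg : HasAlternatingIncrements k t g) :
    0 ≤ divDiff k t g := by
  induction k, hk using Nat.le_induction generalizing t g with
  | base =>
    have hinc : 0 ≤ g (t 1) - g (t 0) := by simpa using hg 1 le_rfl le_rfl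
    rw [divDiff_succ g (strictMonoOn_Iic_of_lt_succ ht).injOn, divDiff_zero, divDiff_zero]
    exact div_nonneg hinc (sub_nonneg.2 (ht 0 one_pos).le)
  | succ k hk ih =>
    have hmono : StrictMonoOn t (Set.Iic (k + 1)) := strictMonoOn_Iic_of_lt_succ ht
    have hshift := ih (fun i hi => ht (i + 1) (by omega)) hg.shift
    have hinit := ih (fun i hi => ht i (by omega)) hg.neg_init
    rw [divDiff_neg] at hinit
    rw [divDiff_succ g hmono.injOn]
    exact div_nonneg (by linarith) (sub_nonneg.2 (hmono.monotoneOn (by simp) (by simp) (by omega)))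

theorem stmt2 (m : ℕ) (hm : 2 ≤ m) (t : ℕ → ℝ) (g : ℝ → ℝ)
    (ht : ∀ i < m, t i < t (i + 1))
    (hg : ∀ i, 1 ≤ i → i ≤ m → 0 ≤ (-1 : ℝ) ^ (m - i) * (g (t i) - g (t (i - 1)))) :
    |divDiff m t g| =
      (|divDiff (m - 1) (fun i => t (i + 1)) g| + |divDiff (m - 1) t g|) / (t m - t 0) := by
  obtain ⟨k, rfl⟩ : ∃ k, m = k + 1 := ⟨m - 1, by omega⟩
  have hg : HasAlternatingIncrements (k + 1) t g := hg
  have hmono : StrictMonoOn t (Set.Iic (k + 1)) := strictMonoOn_Iic_of_lt_succ ht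
  have hshift := divDiff_nonneg_of_hasAlternatingIncrements (by omega)
    (fun i hi => ht (i + 1) (by omega)) hg.shift
  have hinit := divDiff_nonneg_of_hasAlternatingIncrements (by omega)
    (fun i hi => ht i (by omega)) hg.neg_init
  rw [divDiff_neg] at hinit
  have hspan : 0 < t (k + 1) - t 0 := sub_pos.2 (hmono (by simp) (by simp) (by omega))
  rw [Nat.add_sub_cancel, divDiff_succ g hmono.injOn, abs_div, abs_of_pos hspan,
    abs_of_nonneg hshift, abs_of_nonpos (neg_nonneg.1 hinit), abs_of_nonneg (by linarith)]
  ring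
end

section
/- Let 0 ≤ l < m, let f be l times continuously differentiable on [a,b], and let x_0, ..., x_m ∈ [a,b] be distinct. Then |[x_0, ..., x_m; f]| ≤ (‖f^{(l)}‖_{[a,b]} / l!) · ∑_{j=l}^m 1 / ∏_{i=l, i≠j}^m |x_j − x_i|. -/
open Finset Polynomial Set
open scoped Nat

noncomputable def dividedDiff {ι : Type*} [DecidableEq ι] (s : Finset ι) (t : ι → ℝ)
    (g : ℝ → ℝ) : ℝ :=
  ∑ i ∈ s, g (t i) / ∏ j ∈ s.erase i, (t i - t j)

theorem exists_iteratedDerivWithin_eq_zero_of_strictMono {a b : ℝ} (hab : a < b) :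
    ∀ {n : ℕ} {g : ℝ → ℝ} {y : Fin (n + 1) → ℝ}, ContDiffOn ℝ n g (Icc a b) →
      StrictMono y → (∀ i, y i ∈ Icc a b) → (∀ i, g (y i) = 0) →
      ∃ ξ ∈ Icc a b, iteratedDerivWithin n g (Icc a b) ξ = 0
  | 0, g, y, _, _, hy, hgy => ⟨y 0, hy 0, by simpa using hgy 0⟩
  | n + 1, g, y, hg, hmono, hy, hgy => by
    have hRolle : ∀ i : Fin (n + 1), ∃ z ∈ Ioo (y i.castSucc) (y i.succ), deriv g z = 0 :=
      fun i => exists_deriv_eq_zero (hmono (Fin.castSucc_lt_succ (i := i)))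
        (hg.continuousOn.mono (Icc_subset_Icc (hy _).1 (hy _).2)) (by rw [hgy, hgy])
    choose z hz hgz using hRolle
    have hzab : ∀ i, z i ∈ Ioo a b := fun i =>
      ⟨(hy _).1.trans_lt (hz i).1, (hz i).2.trans_le (hy _).2⟩
    have hzmono : StrictMono z := Fin.strictMono_iff_lt_succ.2 fun i =>
      (hz _).2.trans <| by rw [Fin.succ_castSucc]; exact (hz _).1
    obtain ⟨ξ, hξ, hξ0⟩ := exists_iteratedDerivWithin_eq_zero_of_strictMono hab
      (hg.derivWithin (uniqueDiffOn_Icc hab) (by norm_cast)) hzmono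
      (fun i => Ioo_subset_Icc_self (hzab i))
      fun i => by rw [derivWithin_of_mem_nhds (Icc_mem_nhds (hzab i).1 (hzab i).2), hgz]
    exact ⟨ξ, hξ, by rwa [iteratedDerivWithin_succ']⟩

theorem exists_iteratedDerivWithin_eq_zero {a b : ℝ} (hab : a < b) {n : ℕ} {g : ℝ → ℝ}
    (hg : ContDiffOn ℝ n g (Icc a b)) {Z : Finset ℝ} (hZ : #Z = n + 1) (hZab : ↑Z ⊆ Icc a b)
    (hgZ : ∀ z ∈ Z, g z = 0) : ∃ ξ ∈ Icc a b, iteratedDerivWithin n g (Icc a b) ξ = 0 :=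
  exists_iteratedDerivWithin_eq_zero_of_strictMono hab hg (Z.orderEmbOfFin hZ).strictMono
    (fun i => hZab (Z.orderEmbOfFin_mem hZ i)) fun i => hgZ _ (Z.orderEmbOfFin_mem hZ i)

theorem Polynomial.iteratedDeriv_eval_of_natDegree_le {p : ℝ[X]} {n : ℕ} (hp : p.natDegree ≤ n)
    (x : ℝ) : iteratedDeriv n (fun y => p.eval y) x = n ! * p.coeff n := by
  have hiter : ∀ k, deriv^[k] (fun y => p.eval y) = fun y => (derivative^[k] p).eval y := by
    intro k
    induction k with
    | zero => rfl
    | succ k ih =>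
      ext y
      rw [Function.iterate_succ_apply', ih, Function.iterate_succ_apply']
      exact Polynomial.deriv _
  have hconst : derivative^[n] p = C ((derivative^[n] p).coeff 0) :=
    eq_C_of_natDegree_eq_zero (by have := p.natDegree_iterate_derivative n; omega)
  rw [iteratedDeriv_eq_iterate, hiter, hconst]
  simp only [eval_C, coeff_iterate_derivative, zero_add, Nat.descFactorial_self, nsmul_eq_mul]

variable {ι : Type*} [DecidableEq ι]

theorem coeff_interpolate_eq_dividedDiff {s : Finset ι} {t : ι → ℝ} (ht : InjOn t s)
    (g : ℝ → ℝ) :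
    (Lagrange.interpolate s t fun i => g (t i)).coeff (#s - 1) = dividedDiff s t g := by
  rw [Lagrange.coeff_eq_sum ht (Lagrange.degree_interpolate_lt _ ht), dividedDiff]
  exact sum_congr rfl fun i hi => by rw [Lagrange.eval_interpolate_at_node _ ht hi]

theorem exists_iteratedDerivWithin_eq_factorial_mul_dividedDiff {a b : ℝ} (hab : a < b) {n : ℕ}
    {f : ℝ → ℝ} (hf : ContDiffOn ℝ n f (Icc a b)) {s : Finset ι} (hs : #s = n + 1)
    {t : ι → ℝ} (ht : InjOn t s) (htab : MapsTo t s (Icc a b)) :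
    ∃ ξ ∈ Icc a b, iteratedDerivWithin n f (Icc a b) ξ = n ! * dividedDiff s t f := by
  set P := Lagrange.interpolate s t fun i => f (t i)
  have hPdeg : P.natDegree ≤ n := by
    have := Lagrange.degree_interpolate_lt (fun i => f (t i)) ht
    rw [hs] at this
    exact natDegree_le_of_degree_le (Order.le_of_lt_succ (by exact_mod_cast this))
  have hPcoeff : P.coeff n = dividedDiff s t f := by
    have := coeff_interpolate_eq_dividedDiff ht f
    rwa [hs, Nat.add_sub_cancel] at this
  have hPsmooth : ContDiff ℝ n fun y => P.eval y := by
    simpa using P.contDiff_aeval (R := ℝ) (𝕜 := ℝ) n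
  obtain ⟨ξ, hξ, hξ0⟩ := exists_iteratedDerivWithin_eq_zero hab (g := f - fun y => P.eval y)
    (hf.sub hPsmooth.contDiffOn) (Z := s.image t) (by rw [card_image_of_injOn ht, hs])
    (by simpa using htab.image_subset)
    (by
      rintro _ hz
      obtain ⟨i, hi, rfl⟩ := mem_image.1 hz
      exact sub_eq_zero.2 (Lagrange.eval_interpolate_at_node (fun i => f (t i)) ht hi).symm)
  refine ⟨ξ, hξ, ?_⟩
  rw [iteratedDerivWithin_sub hξ (uniqueDiffOn_Icc hab) (hf _ hξ)
      hPsmooth.contDiffWithinAt, sub_eq_zero,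
    iteratedDerivWithin_eq_iteratedDeriv (uniqueDiffOn_Icc hab) hPsmooth.contDiffAt hξ,
    P.iteratedDeriv_eval_of_natDegree_le hPdeg] at hξ0
  rw [hξ0, hPcoeff]

theorem abs_dividedDiff_le {a b : ℝ} (hab : a < b) {n : ℕ} {f : ℝ → ℝ}
    (hf : ContDiffOn ℝ n f (Icc a b)) {M : ℝ}
    (hM : ∀ y ∈ Icc a b, |iteratedDerivWithin n f (Icc a b) y| ≤ M) {s : Finset ι}
    (hs : #s = n + 1) {t : ι → ℝ} (ht : InjOn t s) (htab : MapsTo t s (Icc a b)) :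
    |dividedDiff s t f| ≤ M / n ! := by
  obtain ⟨ξ, hξ, hξeq⟩ := exists_iteratedDerivWithin_eq_factorial_mul_dividedDiff hab hf hs ht htab
  have : dividedDiff s t f = iteratedDerivWithin n f (Icc a b) ξ / n ! := by
    rw [hξeq, mul_div_cancel_left₀ _ (by positivity)]
  rw [this, abs_div, Nat.abs_cast]
  gcongr
  exact hM ξ hξ

theorem dividedDiff_inv_sub {B : Finset ι} (hB : B.Nonempty) {t : ι → ℝ} (ht : InjOn t B)
    {u : ℝ} (hu : ∀ j ∈ B, u ≠ t j) :
    dividedDiff B t (fun y => (u - y)⁻¹) = (∏ j ∈ B, (u - t j))⁻¹ := by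
  have h := Lagrange.eval_interpolate_not_at_node 1 hu
  rw [Lagrange.interpolate_one ht hB, eval_one, Lagrange.eval_nodal] at h
  refine .trans (sum_congr rfl fun j _ => ?_) (eq_inv_of_mul_eq_one_right h.symm)
  rw [Lagrange.nodalWeight, prod_inv_distrib, Pi.one_apply, mul_one, div_eq_mul_inv, mul_comm]

theorem dividedDiff_insert {A : Finset ι} {j : ι} (hj : j ∉ A) (t : ι → ℝ) (g : ℝ → ℝ) :
    dividedDiff (insert j A) t g = g (t j) / ∏ k ∈ A, (t j - t k) +
      ∑ i ∈ A, g (t i) / ((t i - t j) * ∏ k ∈ A.erase i, (t i - t k)) := by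
  rw [dividedDiff, sum_insert hj, erase_insert hj]
  congr 1
  refine sum_congr rfl fun i hi => ?_
  rw [erase_insert_of_ne (ne_of_mem_of_not_mem hi hj).symm,
    prod_insert fun h => hj (mem_of_mem_erase h)]

theorem dividedDiff_union {A B : Finset ι} (hAB : Disjoint A B) (hB : B.Nonempty) {t : ι → ℝ}
    (ht : InjOn t ↑(A ∪ B)) (g : ℝ → ℝ) :
    dividedDiff (A ∪ B) t g =
      ∑ j ∈ B, dividedDiff (insert j A) t g / ∏ k ∈ B.erase j, (t j - t k) := by
  have hpartial : ∀ i ∈ A,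
      ∑ j ∈ B, (t i - t j)⁻¹ / ∏ k ∈ B.erase j, (t j - t k) = (∏ j ∈ B, (t i - t j))⁻¹ :=
    fun i hi => dividedDiff_inv_sub hB (ht.mono (by simp)) fun j hj h =>
      Finset.disjoint_left.1 hAB hi (by rwa [ht (by simp [hi]) (by simp [hj]) h])
  have hsplitA : ∀ i ∈ A, ∏ k ∈ (A ∪ B).erase i, (t i - t k) =
      (∏ k ∈ A.erase i, (t i - t k)) * ∏ k ∈ B, (t i - t k) := fun i hi => by
    rw [erase_union_distrib, erase_eq_of_notMem (disjoint_left.1 hAB hi),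
      prod_union (hAB.mono_left (erase_subset _ _))]
  have hsplitB : ∀ j ∈ B, ∏ k ∈ (A ∪ B).erase j, (t j - t k) =
      (∏ k ∈ A, (t j - t k)) * ∏ k ∈ B.erase j, (t j - t k) := fun j hj => by
    rw [erase_union_distrib, erase_eq_of_notMem (disjoint_right.1 hAB hj),
      prod_union (hAB.mono_right (erase_subset _ _))]
  calc dividedDiff (A ∪ B) t g
      = ∑ i ∈ A, g (t i) / (∏ k ∈ A.erase i, (t i - t k)) *
          ∑ j ∈ B, (t i - t j)⁻¹ / ∏ k ∈ B.erase j, (t j - t k) +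
        ∑ j ∈ B, g (t j) / (∏ k ∈ A, (t j - t k)) / ∏ k ∈ B.erase j, (t j - t k) := by
        rw [dividedDiff, sum_union hAB]
        congr 1
        · refine sum_congr rfl fun i hi => ?_
          rw [hpartial i hi, hsplitA i hi, div_mul_eq_div_div, div_eq_mul_inv]
        · refine sum_congr rfl fun j hj => ?_
          rw [hsplitB j hj, div_mul_eq_div_div]
    _ = ∑ j ∈ B, dividedDiff (insert j A) t g / ∏ k ∈ B.erase j, (t j - t k) := by
        simp_rw [mul_sum, add_comm (∑ i ∈ A, _)]
        rw [sum_comm, ← sum_add_distrib]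
        refine sum_congr rfl fun j hj => ?_
        rw [dividedDiff_insert (disjoint_right.1 hAB hj), add_div, sum_div]
        congr 1
        refine sum_congr rfl fun i _ => ?_
        field_simp

theorem abs_dividedDiff_union_le {a b : ℝ} (hab : a < b) {n : ℕ} {f : ℝ → ℝ}
    (hf : ContDiffOn ℝ n f (Icc a b)) {M : ℝ}
    (hM : ∀ y ∈ Icc a b, |iteratedDerivWithin n f (Icc a b) y| ≤ M) {A B : Finset ι}
    (hA : #A = n) (hAB : Disjoint A B) (hB : B.Nonempty) {t : ι → ℝ} (ht : InjOn t ↑(A ∪ B))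
    (htab : MapsTo t ↑(A ∪ B) (Icc a b)) :
    |dividedDiff (A ∪ B) t f| ≤ M / n ! * ∑ j ∈ B, 1 / ∏ k ∈ B.erase j, |t j - t k| := by
  have hbound : ∀ j ∈ B, |dividedDiff (insert j A) t f| ≤ M / n ! := fun j hj =>
    have hsub : insert j A ⊆ A ∪ B := insert_subset (mem_union_right _ hj) subset_union_left
    abs_dividedDiff_le hab hf hM (by rw [card_insert_of_notMem (disjoint_right.1 hAB hj), hA])
      (ht.mono (by exact_mod_cast hsub)) (htab.mono_left (by exact_mod_cast hsub))
  calc |dividedDiff (A ∪ B) t f|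
      = |∑ j ∈ B, dividedDiff (insert j A) t f / ∏ k ∈ B.erase j, (t j - t k)| := by
        rw [dividedDiff_union hAB hB ht]
    _ ≤ ∑ j ∈ B, |dividedDiff (insert j A) t f| / ∏ k ∈ B.erase j, |t j - t k| :=
        (abs_sum_le_sum_abs _ _).trans_eq <| by simp only [abs_div, abs_prod]
    _ ≤ ∑ j ∈ B, M / n ! * (1 / ∏ k ∈ B.erase j, |t j - t k|) := by
        gcongr with j hj
        rw [mul_one_div]
        gcongr
        exact hbound j hj
    _ = M / n ! * ∑ j ∈ B, 1 / ∏ k ∈ B.erase j, |t j - t k| := (mul_sum _ _ _).symm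

theorem stmt4 (l m : ℕ) (hlm : l < m) (a b : ℝ) (hab : a < b) (f : ℝ → ℝ)
    (hf : ContDiffOn ℝ l f (Set.Icc a b))
    (x : ℕ → ℝ) (hx : ∀ i ≤ m, x i ∈ Set.Icc a b)
    (hdist : ∀ i ≤ m, ∀ j ≤ m, i ≠ j → x i ≠ x j)
    (M : ℝ) (hM : ∀ y ∈ Set.Icc a b, |iteratedDerivWithin l f (Set.Icc a b) y| ≤ M) :
    |divDiff m x f| ≤ (M / Nat.factorial l) *
      ∑ j ∈ Finset.Icc l m, 1 / ∏ i ∈ (Finset.Icc l m).erase j, |x j - x i| := by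
  have hknots : range (m + 1) = range l ∪ Finset.Icc l m := by
    ext k; simp only [Finset.mem_range, Finset.mem_union, Finset.mem_Icc]; omega
  have hdisj : Disjoint (range l) (Finset.Icc l m) := Finset.disjoint_left.2 fun k hk hk' => by
    simp only [Finset.mem_range, Finset.mem_Icc] at hk hk'; omega
  have hle : ∀ {i}, i ∈ (↑(range (m + 1)) : Set ℕ) → i ≤ m := fun hi => by
    simpa [Nat.lt_succ_iff] using hi
  have hinj : InjOn x ↑(range (m + 1)) := fun i hi j hj hij => by
    by_contra hne
    exact hdist i (hle hi) j (hle hj) hne hij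
  have hmaps : MapsTo x ↑(range (m + 1)) (Icc a b) := fun i hi => hx i (hle hi)
  rw [hknots] at hinj hmaps
  rw [show divDiff m x f = dividedDiff (range (m + 1)) x f from rfl, hknots]
  exact abs_dividedDiff_union_le hab hf hM (card_range l) hdisj ⟨m, by simp [hlm.le]⟩ hinj hmaps
end

section
/- Let a ≥ 0, real numbers t_0 < t_m, points x_1, ..., x_{m-1} ∈ (t_0, t_m), and let g be differentiable with g'(x) = a·∏_{i=1}^{m-1}(x - x_i). Then ∫_{t_0}^{t_m} |g'(x)| dx ≤ (a/m)·(t_m - t_0)^m. -/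
/-!
With `n = m - 1` points, AM–GM bounds `∏ |y - x i|` pointwise by `(1/n) ∑ |y - x i| ^ n`.
Each `∫ |y - c| ^ n` over `[t₀, t_m]` is at most `(t_m - t₀) ^ (n+1) / (n+1)`: the point `c`
splits the interval into two pieces, and the `(n+1)`-st powers of their lengths add up to at
most that of the whole length.
-/

open Finset intervalIntegral

theorem Real.prod_le_sum_pow_card_div_card {ι : Type*} {s : Finset ι} (hs : s.Nonempty)
    {b : ι → ℝ} (hb : ∀ i ∈ s, 0 ≤ b i) :
    ∏ i ∈ s, b i ≤ (∑ i ∈ s, b i ^ #s) / #s := by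
  have hn : (0 : ℝ) < #s := by exact_mod_cast hs.card_pos
  have amgm := Real.geom_mean_le_arith_mean_weighted s (fun _ ↦ (#s : ℝ)⁻¹)
    (fun i ↦ b i ^ #s) (fun _ _ ↦ by positivity) (by simp [hn.ne'])
    (fun i hi ↦ pow_nonneg (hb i hi) _)
  have hroot : ∀ i ∈ s, (b i ^ #s) ^ (#s : ℝ)⁻¹ = b i := fun i hi ↦
    Real.pow_rpow_inv_natCast (hb i hi) (by exact_mod_cast hn.ne')
  rw [prod_congr rfl hroot, ← mul_sum, inv_mul_eq_div] at amgm
  exact amgm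

theorem integral_abs_pow_of_nonneg (n : ℕ) {b : ℝ} (hb : 0 ≤ b) :
    ∫ u in 0..b, |u| ^ n = b ^ (n + 1) / (n + 1) := by
  have hpos : ∀ u ∈ Set.uIcc 0 b, |u| ^ n = u ^ n := fun u hu ↦ by
    rw [Set.uIcc_of_le hb] at hu
    rw [abs_of_nonneg hu.1]
  simp [integral_congr hpos]

theorem integral_abs_sub_pow {t₀ t₁ c : ℝ} (hc : c ∈ Set.Icc t₀ t₁) (n : ℕ) :
    ∫ y in t₀..t₁, |y - c| ^ n = ((c - t₀) ^ (n + 1) + (t₁ - c) ^ (n + 1)) / (n + 1) := by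
  have hint : ∀ a b : ℝ,
      IntervalIntegrable (fun u : ℝ ↦ |u| ^ n) MeasureTheory.volume a b :=
    fun _ _ ↦ (continuous_abs.pow n).intervalIntegrable _ _
  have hleft : ∫ u in (t₀ - c)..0, |u| ^ n = (c - t₀) ^ (n + 1) / (n + 1) := by
    have hneg := integral_comp_neg (a := 0) (b := c - t₀) (fun u ↦ |u| ^ n)
    simp only [abs_neg, neg_zero, neg_sub] at hneg
    rw [← hneg, integral_abs_pow_of_nonneg n (sub_nonneg.2 hc.1)]
  rw [integral_comp_sub_right (fun u ↦ |u| ^ n),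
    ← integral_add_adjacent_intervals (hint _ 0) (hint 0 _), hleft,
    integral_abs_pow_of_nonneg n (sub_nonneg.2 hc.2), add_div]

theorem integral_abs_sub_pow_le {t₀ t₁ c : ℝ} (hc : c ∈ Set.Icc t₀ t₁) (n : ℕ) :
    ∫ y in t₀..t₁, |y - c| ^ n ≤ (t₁ - t₀) ^ (n + 1) / (n + 1) := by
  rw [integral_abs_sub_pow hc]
  gcongr
  calc (c - t₀) ^ (n + 1) + (t₁ - c) ^ (n + 1) ≤ ((c - t₀) + (t₁ - c)) ^ (n + 1) :=
        pow_add_pow_le (sub_nonneg.2 hc.1) (sub_nonneg.2 hc.2) n.succ_ne_zero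
    _ = (t₁ - t₀) ^ (n + 1) := by ring

theorem integral_prod_abs_sub_le {ι : Type*} (s : Finset ι) {t₀ t₁ : ℝ} {x : ι → ℝ}
    (hx : ∀ i ∈ s, x i ∈ Set.Icc t₀ t₁) :
    ∫ y in t₀..t₁, ∏ i ∈ s, |y - x i| ≤ (t₁ - t₀) ^ (#s + 1) / (#s + 1) := by
  obtain rfl | hs := s.eq_empty_or_nonempty
  · simp
  obtain ⟨j, hj⟩ := hs
  have hle : t₀ ≤ t₁ := (hx j hj).1.trans (hx j hj).2
  have hcont : ∀ i, Continuous fun y : ℝ ↦ |y - x i| := fun i ↦ by fun_prop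
  calc ∫ y in t₀..t₁, ∏ i ∈ s, |y - x i|
      ≤ ∫ y in t₀..t₁, (∑ i ∈ s, |y - x i| ^ #s) / #s := by
        refine integral_mono_on hle ?_ ?_ fun y _ ↦
          Real.prod_le_sum_pow_card_div_card ⟨j, hj⟩ fun i _ ↦ abs_nonneg _
        · exact (continuous_finsetProd s fun i _ ↦ hcont i).intervalIntegrable _ _
        · exact ((continuous_finsetSum s fun i _ ↦ (hcont i).pow _).div_const _
            ).intervalIntegrable _ _
    _ = (∑ i ∈ s, ∫ y in t₀..t₁, |y - x i| ^ #s) / #s := by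
        rw [integral_div, integral_finsetSum]
        exact fun i _ ↦ ((hcont i).pow _).intervalIntegrable _ _
    _ ≤ (∑ _i ∈ s, (t₁ - t₀) ^ (#s + 1) / (#s + 1)) / #s := by
        gcongr with i hi
        exact integral_abs_sub_pow_le (hx i hi) _
    _ = (t₁ - t₀) ^ (#s + 1) / (#s + 1) := by
        rw [sum_const, nsmul_eq_mul]
        field_simp [(card_pos.2 ⟨j, hj⟩).ne']

theorem stmt5_general (m : ℕ) (hm : 1 ≤ m) (a t0 tm : ℝ) (ha : 0 ≤ a)
    (x : ℕ → ℝ) (hx : ∀ i, 1 ≤ i → i ≤ m - 1 → x i ∈ Set.Ioo t0 tm)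
    (g : ℝ → ℝ)
    (hg : ∀ y : ℝ, HasDerivAt g (a * ∏ i ∈ Finset.Icc 1 (m - 1), (y - x i)) y) :
    ∫ y in t0..tm, |deriv g y| ≤ (a / m) * (tm - t0) ^ m := by
  have habs : ∀ y, |deriv g y| = a * ∏ i ∈ Icc 1 (m - 1), |y - x i| := fun y ↦ by
    rw [(hg y).deriv, abs_mul, abs_of_nonneg ha, abs_prod]
  have hxIcc : ∀ i ∈ Icc 1 (m - 1), x i ∈ Set.Icc t0 tm := fun i hi ↦
    Set.Ioo_subset_Icc_self (hx i (mem_Icc.1 hi).1 (mem_Icc.1 hi).2)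
  have hcard : #(Icc 1 (m - 1)) + 1 = m := by
    rw [Nat.card_Icc, Nat.add_sub_cancel, Nat.sub_add_cancel hm]
  have hprod := integral_prod_abs_sub_le _ hxIcc
  rw [← Nat.cast_add_one, hcard] at hprod
  calc ∫ y in t0..tm, |deriv g y| = a * ∫ y in t0..tm, ∏ i ∈ Icc 1 (m - 1), |y - x i| := by
        simp only [habs, integral_const_mul]
    _ ≤ a * ((tm - t0) ^ m / m) := by gcongr
    _ = (a / m) * (tm - t0) ^ m := by ring

theorem stmt5 (m : ℕ) (hm : 1 ≤ m) (a t0 tm : ℝ) (ha : 0 ≤ a) (htt : t0 < tm)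
    (x : ℕ → ℝ) (hx : ∀ i, 1 ≤ i → i ≤ m - 1 → x i ∈ Set.Ioo t0 tm)
    (g : ℝ → ℝ)
    (hg : ∀ y : ℝ, HasDerivAt g (a * ∏ i ∈ Finset.Icc 1 (m - 1), (y - x i)) y) :
    ∫ y in t0..tm, |deriv g y| ≤ (a / m) * (tm - t0) ^ m :=
  stmt5_general m hm a t0 tm ha x hx g hg
end

section
/- Let f : ℝ → ℝ be 2π-periodic and continuous, with 2s points y_1 < y_2 < ... < y_{2s} in a period such that (−1)^{i−1}f is nondecreasing on each [y_{i−1}, y_i] (with y_0 := y_{2s} − 2π). If f is continuously differentiable, then f'(x)·∏_{i=1}^{2s} sin((x − y_i)/2) ≥ 0 for all x ∈ ℝ. -/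
/-!
On the `j`-th interval `[y j, y (j + 1)]` the function `(-1) ^ j * f` is monotone, so
`(-1) ^ j * f' ≥ 0` there. For such `x` the factors `sin ((x - y i) / 2)` with `i ≤ j` are
nonnegative and the `2 s - j` factors with `i > j` are nonpositive, because `x - y i` lies in
`[0, 2π]`, resp. `[-2π, 0]`; hence `(-1) ^ (2 s - j) * Π x ≥ 0`, and multiplying the two
inequalities gives `f' * Π ≥ 0` on one period. Both `f'` and `Π` (a product of an even number of
factors, each changing sign under `x ↦ x + 2π`) are `2π`-periodic, which covers all of `ℝ`.
-/

open Real

theorem MonotoneOn.deriv_nonneg_of_mem_Icc {g : ℝ → ℝ} {a b x : ℝ}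
    (hg : MonotoneOn g (Set.Icc a b)) (hab : a < b) (hx : x ∈ Set.Icc a b) :
    0 ≤ deriv g x := by
  by_cases hd : DifferentiableAt ℝ g x
  · rw [← hd.derivWithin (uniqueDiffOn_Icc hab x hx)]
    exact hg.derivWithin_nonneg
  · rw [deriv_zero_of_not_differentiableAt hd]

theorem Function.Periodic.deriv {𝕜 F : Type*} [NontriviallyNormedField 𝕜]
    [NormedAddCommGroup F] [NormedSpace 𝕜 F] {f : 𝕜 → F} {c : 𝕜} (hf : Function.Periodic f c) :
    Function.Periodic (deriv f) c := fun x => by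
  rw [← deriv_comp_add_const, show (fun t => f (t + c)) = f from funext hf]

theorem exists_lt_mem_Ico_succ {α : Type*} [LinearOrder α] {y : ℕ → α} {x : α} :
    ∀ {n : ℕ}, x ∈ Set.Ico (y 0) (y n) → ∃ j < n, x ∈ Set.Ico (y j) (y (j + 1))
  | 0, hx => absurd hx.2 (not_lt.mpr hx.1)
  | n + 1, hx => by
    by_cases hxn : x < y n
    · obtain ⟨j, hj, hxj⟩ := exists_lt_mem_Ico_succ ⟨hx.1, hxn⟩
      exact ⟨j, by omega, hxj⟩
    · exact ⟨n, n.lt_succ_self, not_lt.mp hxn, hx.2⟩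

theorem periodic_prod_sin_half_sub {ι : Type*} {t : Finset ι} (ht : Even t.card)
    (y : ι → ℝ) :
    Function.Periodic (fun x => ∏ i ∈ t, sin ((x - y i) / 2)) (2 * π) := fun x => by
  have hshift : ∀ i, sin ((x + 2 * π - y i) / 2) = -sin ((x - y i) / 2) := fun i => by
    rw [show (x + 2 * π - y i) / 2 = (x - y i) / 2 + π by ring, sin_add_pi]
  simp only [hshift, Finset.prod_neg, ht.neg_one_pow, one_mul]

theorem neg_one_pow_mul_prod_sin_half_sub_nonneg {n j : ℕ} {y : ℕ → ℝ} {x : ℝ}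
    (hy : ∀ i < n, y i ≤ y (i + 1)) (hyper : y n = y 0 + 2 * π) (hj : j < n)
    (hx : x ∈ Set.Icc (y j) (y (j + 1))) :
    0 ≤ (-1) ^ (n - j) * ∏ i ∈ Finset.Icc 1 n, sin ((x - y i) / 2) := by
  have hmono : MonotoneOn y (Set.Iic n) :=
    monotoneOn_of_le_succ Set.ordConnected_Iic fun i _ _ hi => by
      rw [Order.succ_eq_add_one] at hi ⊢
      exact hy i (Nat.lt_of_succ_le hi)
  have hle : ∀ {a b}, a ≤ b → b ≤ n → y a ≤ y b := fun hab hbn =>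
    hmono (Set.mem_Iic.mpr (hab.trans hbn)) (Set.mem_Iic.mpr hbn) hab
  have hleft : 0 ≤ ∏ i ∈ Finset.Ioc 0 j, sin ((x - y i) / 2) :=
    Finset.prod_nonneg fun i hi => by
      rw [Finset.mem_Ioc] at hi
      exact sin_nonneg_of_nonneg_of_le_pi (by linarith [hx.1, hle hi.2 hj.le])
        (by linarith [hx.2, hle (Nat.zero_le i) (hi.2.trans hj.le), hle hj le_rfl])
  have hright : 0 ≤ ∏ i ∈ Finset.Ioc j n, -sin ((x - y i) / 2) :=
    Finset.prod_nonneg fun i hi => by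
      rw [Finset.mem_Ioc] at hi
      exact neg_nonneg.mpr <| sin_nonpos_of_nonpos_of_neg_pi_le
        (by linarith [hx.2, hle hi.1 hi.2])
        (by linarith [hx.1, hle hi.2 le_rfl, hle (Nat.zero_le j) hj.le])
  rw [Finset.prod_neg, Nat.card_Ioc] at hright
  rw [show Finset.Icc 1 n = Finset.Ioc 0 n from Finset.Icc_add_one_left_eq_Ioc 0 n,
    ← Finset.prod_Ioc_consecutive _ (Nat.zero_le j) hj.le]
  calc (0 : ℝ) ≤ _ * _ := mul_nonneg hleft hright
    _ = _ := by ring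

theorem stmt16_general (s : ℕ) (y : ℕ → ℝ) (f : ℝ → ℝ)
    (hy : ∀ i < 2 * s, y i < y (i + 1))
    (hyper : y (2 * s) = y 0 + 2 * Real.pi)
    (hfper : ∀ x : ℝ, f (x + 2 * Real.pi) = f x)
    (hmono : ∀ i, 1 ≤ i → i ≤ 2 * s →
      MonotoneOn (fun x => (-1 : ℝ) ^ (i - 1) * f x) (Set.Icc (y (i - 1)) (y i))) :
    ∀ x : ℝ, 0 ≤ deriv f x * ∏ i ∈ Finset.Icc 1 (2 * s), Real.sin ((x - y i) / 2) := by
  have hprod : Function.Periodic (fun x => ∏ i ∈ Finset.Icc 1 (2 * s), sin ((x - y i) / 2))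
      (2 * π) := periodic_prod_sin_half_sub (by simp) y
  intro x
  obtain ⟨x', hx', hxx'⟩ :=
    ((Function.Periodic.deriv hfper).mul hprod).exists_mem_Ico two_pi_pos x (y 0)
  rw [← hyper] at hx'
  obtain ⟨j, hj, hxj⟩ := exists_lt_mem_Ico_succ hx'
  have hderiv : 0 ≤ (-1) ^ j * deriv f x' := by
    simpa [deriv_const_mul_field] using
      (hmono (j + 1) (by omega) hj).deriv_nonneg_of_mem_Icc (hy j hj) (Set.Ico_subset_Icc_self hxj)
  have hsin := neg_one_pow_mul_prod_sin_half_sub_nonneg (fun i hi => (hy i hi).le) hyper hj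
    (Set.Ico_subset_Icc_self hxj)
  have hsign : (-1 : ℝ) ^ j * (-1) ^ (2 * s - j) = 1 := by
    rw [← pow_add, Nat.add_sub_cancel' hj.le, pow_mul]
    norm_num
  rw [Pi.mul_apply, Pi.mul_apply] at hxx'
  rw [hxx']
  calc (0 : ℝ) ≤ ((-1) ^ j * deriv f x') * ((-1) ^ (2 * s - j) * _) := mul_nonneg hderiv hsin
    _ = _ := by
      linear_combination (deriv f x' * ∏ i ∈ Finset.Icc 1 (2 * s), sin ((x' - y i) / 2)) * hsign

theorem stmt16 (s : ℕ) (hs : 1 ≤ s) (y : ℕ → ℝ) (f : ℝ → ℝ)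
    (hy : ∀ i < 2 * s, y i < y (i + 1))
    (hyper : y (2 * s) = y 0 + 2 * Real.pi)
    (hfper : ∀ x : ℝ, f (x + 2 * Real.pi) = f x)
    (hmono : ∀ i, 1 ≤ i → i ≤ 2 * s →
      MonotoneOn (fun x => (-1 : ℝ) ^ (i - 1) * f x) (Set.Icc (y (i - 1)) (y i)))
    (hf : ContDiff ℝ 1 f) :
    ∀ x : ℝ, 0 ≤ deriv f x * ∏ i ∈ Finset.Icc 1 (2 * s), Real.sin ((x - y i) / 2) :=
  stmt16_general s y f hy hyper hfper hmono
end

section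
/- Let m ≥ 1, let t_0 < ... < t_m be real numbers and suppose g satisfies the alternation condition (-1)^{m-i}(g(t_i) − g(t_{i-1})) ≥ 0 for 1 ≤ i ≤ m. Let L be the polynomial of degree ≤ m interpolating g at t_0, ..., t_m. Then L'(x) = a·∏_{i=1}^{m-1}(x − x_i) for some a ≥ 0 and points x_1, ..., x_{m-1} ∈ (t_0, t_m). -/
/-!
By the mean value theorem, `L'` has weakly alternating signs at points `c 0 < ⋯ < c (m - 1)`,
one in each gap `(t i, t (i + 1))`, ending with a nonnegative value. A polynomial of degree `≤ n`
with such signs at `n + 1` increasing points is `a ∏ (X - x i)` with `a ≥ 0` and all `x i` between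
the first and the last point. Induct on `n`: the intermediate value theorem gives a root `r` in the
last gap; dividing out `X - r` flips the signs at all earlier points, while at the last index the
sign survives at an endpoint of the gap different from `r`.
-/

open Polynomial Set

lemma exists_root_and_nonneg_mul_sub {f : ℝ → ℝ} {a b : ℝ} (hab : a < b)
    (hf : ContinuousOn f (Icc a b)) (ha : f a ≤ 0) (hb : 0 ≤ f b) :
    ∃ r ∈ Icc a b, f r = 0 ∧ ∃ z ∈ Icc a b, z ≠ r ∧ 0 ≤ f z * (z - r) := by
  have ha_mem : a ∈ Icc a b := left_mem_Icc.2 hab.le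
  have hb_mem : b ∈ Icc a b := right_mem_Icc.2 hab.le
  rcases hb.eq_or_lt with hb0 | hb_pos
  · exact ⟨b, hb_mem, hb0.symm, a, ha_mem, hab.ne,
      mul_nonneg_of_nonpos_of_nonpos ha (sub_nonpos.2 hab.le)⟩
  rcases ha.eq_or_lt with ha0 | ha_neg
  · exact ⟨a, ha_mem, ha0, b, hb_mem, hab.ne', mul_nonneg hb_pos.le (sub_nonneg.2 hab.le)⟩
  obtain ⟨r, hr, hr0⟩ := intermediate_value_Ioo hab.le hf ⟨ha_neg, hb_pos⟩
  exact ⟨r, Ioo_subset_Icc_self hr, hr0, b, hb_mem, hr.2.ne',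
    mul_nonneg hb_pos.le (sub_nonneg.2 hr.2.le)⟩

lemma alternating_sign_divByMonic_X_sub_C {n : ℕ} {p : ℝ[X]} {y : ℕ → ℝ}
    (hy : StrictMonoOn y (Iic (n + 1)))
    (hsign : ∀ i ≤ n + 1, 0 ≤ (-1 : ℝ) ^ (n + 1 - i) * p.eval (y i))
    {r z : ℝ} (hr : y n ≤ r) (hroot : p.IsRoot r) (hzr : z ≠ r) (hz : 0 ≤ p.eval z * (z - r)) :
    ∀ i ≤ n, 0 ≤ (-1 : ℝ) ^ (n - i) * (p /ₘ (X - C r)).eval (Function.update y n z i) := by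
  have heval (w : ℝ) : p.eval w = (w - r) * (p /ₘ (X - C r)).eval w := by
    conv_lhs => rw [← mul_divByMonic_eq_iff_isRoot.2 hroot]
    simp
  intro i hi
  rcases hi.lt_or_eq with hi | rfl
  · rw [Function.update_of_ne hi.ne]
    have hyr : 0 < r - y i :=
      sub_pos.2 ((hy (by simp; omega) (by simp) hi).trans_le hr)
    have hs := hsign i (by omega)
    rw [show n + 1 - i = n - i + 1 by omega, pow_succ, heval] at hs
    exact nonneg_of_mul_nonneg_left (by linarith) hyr
  · rw [Function.update_self, Nat.sub_self, pow_zero, one_mul]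
    rw [heval, mul_right_comm, ← sq] at hz
    exact nonneg_of_mul_nonneg_right hz (sq_pos_of_ne_zero (sub_ne_zero.2 hzr))

lemma mem_Icc_of_strictMonoOn {n : ℕ} {y : ℕ → ℝ} (hy : StrictMonoOn y (Iic n)) :
    ∀ i ≤ n, y i ∈ Icc (y 0) (y n) := fun i hi =>
  ⟨hy.monotoneOn (by simp) (by simpa) (Nat.zero_le i), hy.monotoneOn (by simpa) (by simp) hi⟩

lemma update_lt_succ {n : ℕ} {y : ℕ → ℝ} (hy : ∀ i < n + 1, y i < y (i + 1)) {z : ℝ}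
    (hz : y n ≤ z) : ∀ i < n, Function.update y n z i < Function.update y n z (i + 1) := by
  intro i hi
  rw [Function.update_of_ne hi.ne]
  rcases (Nat.succ_le_of_lt hi).lt_or_eq with hi' | rfl
  · rw [Function.update_of_ne hi'.ne]
    exact hy i (by omega)
  · rw [Function.update_self]
    exact (hy i (by omega)).trans_le hz

lemma update_mem_Icc {n : ℕ} {y : ℕ → ℝ} {a b z : ℝ} (hy : ∀ i ≤ n + 1, y i ∈ Icc a b)
    (hz : z ∈ Icc (y n) (y (n + 1))) : ∀ i ≤ n, Function.update y n z i ∈ Icc a b := by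
  intro i hi
  rcases eq_or_ne i n with rfl | hin
  · rw [Function.update_self]
    exact ⟨(hy i (by omega)).1.trans hz.1, hz.2.trans (hy (i + 1) le_rfl).2⟩
  · rw [Function.update_of_ne hin]
    exact hy i (by omega)

lemma prod_Icc_update_succ_top {M α : Type*} [CommMonoid M] (f : α → M) (x : ℕ → α) (n : ℕ)
    (r : α) : ∏ i ∈ Finset.Icc 1 (n + 1), f (Function.update x (n + 1) r i) =
      (∏ i ∈ Finset.Icc 1 n, f (x i)) * f r := by
  rw [Finset.prod_Icc_succ_top (by omega), Function.update_self]
  congr 1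
  exact Finset.prod_congr rfl fun i hi => by
    rw [Function.update_of_ne (by simp at hi; omega)]

theorem exists_eq_C_mul_prod_X_sub_C_of_alternating (n : ℕ) (p : ℝ[X]) (y : ℕ → ℝ)
    (hp : p.natDegree ≤ n) (hy : ∀ i < n, y i < y (i + 1))
    (hsign : ∀ i ≤ n, 0 ≤ (-1 : ℝ) ^ (n - i) * p.eval (y i)) :
    ∃ a : ℝ, 0 ≤ a ∧ ∃ x : ℕ → ℝ, (∀ i ∈ Finset.Icc 1 n, x i ∈ Icc (y 0) (y n)) ∧
      p = C a * ∏ i ∈ Finset.Icc 1 n, (X - C (x i)) := by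
  induction n generalizing p y with
  | zero =>
    refine ⟨p.eval (y 0), by simpa using hsign 0 le_rfl, y, by simp, ?_⟩
    rw [eq_C_of_natDegree_le_zero hp]
    simp
  | succ n ih =>
    have hy_mono : StrictMonoOn y (Iic (n + 1)) := strictMonoOn_Iic_of_lt_succ hy
    obtain ⟨r, hr, hroot, z, hz, hzr, hz_sign⟩ :=
      exists_root_and_nonneg_mul_sub (hy n n.lt_succ_self) p.continuous.continuousOn
        (by simpa [Nat.sub_succ_lt_self] using hsign n n.le_succ)
        (by simpa using hsign (n + 1) le_rfl)
    have hq : (p /ₘ (X - C r)).natDegree ≤ n := by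
      rw [natDegree_divByMonic _ (monic_X_sub_C r), natDegree_X_sub_C]
      omega
    have hy_mem : ∀ i ≤ n + 1, y i ∈ Icc (y 0) (y (n + 1)) := mem_Icc_of_strictMonoOn hy_mono
    have hy'_mem := update_mem_Icc hy_mem hz
    obtain ⟨a, ha, x, hx, hqx⟩ := ih _ _ hq (update_lt_succ hy hz.1)
      (alternating_sign_divByMonic_X_sub_C hy_mono hsign hr.1 hroot hzr hz_sign)
    refine ⟨a, ha, Function.update x (n + 1) r, fun i hi => ?_, ?_⟩
    · rcases eq_or_ne i (n + 1) with rfl | hin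
      · rw [Function.update_self]
        exact ⟨(hy_mem n (by omega)).1.trans hr.1, hr.2⟩
      · rw [Function.update_of_ne hin]
        exact Icc_subset_Icc (hy'_mem 0 (Nat.zero_le n)).1 (hy'_mem n le_rfl).2
          (hx i (by simp at hi ⊢; omega))
    · rw [← mul_divByMonic_eq_iff_isRoot.2 hroot, hqx,
        prod_Icc_update_succ_top (fun u => X - C u)]
      ring

lemma Polynomial.exists_eval_derivative_mul_sub_eq (p : ℝ[X]) {a b : ℝ} (hab : a < b) :
    ∃ c ∈ Ioo a b, (derivative p).eval c * (b - a) = p.eval b - p.eval a := by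
  obtain ⟨c, hc, hslope⟩ := exists_deriv_eq_slope (p.eval ·) hab p.continuous.continuousOn
    p.differentiable.differentiableOn
  refine ⟨c, hc, ?_⟩
  rw [Polynomial.deriv, eq_div_iff (sub_ne_zero.2 hab.ne')] at hslope
  exact hslope

lemma Polynomial.exists_mean_value_points (p : ℝ[X]) {m : ℕ} {t : ℕ → ℝ}
    (ht : ∀ i < m, t i < t (i + 1)) :
    ∃ c : ℕ → ℝ, ∀ i < m, c i ∈ Ioo (t i) (t (i + 1)) ∧
      (derivative p).eval (c i) * (t (i + 1) - t i) = p.eval (t (i + 1)) - p.eval (t i) := by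
  have (i : ℕ) : ∃ c, i < m → c ∈ Ioo (t i) (t (i + 1)) ∧
      (derivative p).eval c * (t (i + 1) - t i) = p.eval (t (i + 1)) - p.eval (t i) := by
    by_cases hi : i < m
    · obtain ⟨c, hc, hmv⟩ := p.exists_eval_derivative_mul_sub_eq (ht i hi)
      exact ⟨c, fun _ => ⟨hc, hmv⟩⟩
    · exact ⟨0, fun h => absurd h hi⟩
  choose c hc using this
  exact ⟨c, hc⟩

theorem stmt17 (m : ℕ) (hm : 1 ≤ m) (t : ℕ → ℝ) (g : ℝ → ℝ)
    (ht : ∀ i < m, t i < t (i + 1))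
    (hg : ∀ i, 1 ≤ i → i ≤ m → 0 ≤ (-1 : ℝ) ^ (m - i) * (g (t i) - g (t (i - 1))))
    (L : Polynomial ℝ) (hdeg : L.degree ≤ m)
    (hinterp : ∀ i ≤ m, L.eval (t i) = g (t i)) :
    ∃ a : ℝ, 0 ≤ a ∧ ∃ x : ℕ → ℝ,
      (∀ i, 1 ≤ i → i ≤ m - 1 → x i ∈ Set.Ioo (t 0) (t m)) ∧
      ∀ y : ℝ, (Polynomial.derivative L).eval y =
        a * ∏ i ∈ Finset.Icc 1 (m - 1), (y - x i) := by
  have hL' : (derivative L).natDegree ≤ m - 1 :=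
    (natDegree_derivative_le L).trans (Nat.sub_le_sub_right (natDegree_le_of_degree_le hdeg) 1)
  obtain ⟨c, hc⟩ := L.exists_mean_value_points ht
  have hc_lt : ∀ i < m - 1, c i < c (i + 1) := fun i hi =>
    (hc i (by omega)).1.2.trans (hc (i + 1) (by omega)).1.1
  have hc_sign : ∀ i ≤ m - 1, 0 ≤ (-1 : ℝ) ^ (m - 1 - i) * (derivative L).eval (c i) := by
    intro i hi
    have hgi := hg (i + 1) (by omega) (by omega)
    rw [Nat.add_sub_cancel, show m - (i + 1) = m - 1 - i by omega, ← hinterp i (by omega),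
      ← hinterp (i + 1) (by omega), ← (hc i (by omega)).2, ← mul_assoc] at hgi
    exact nonneg_of_mul_nonneg_left hgi (sub_pos.2 (ht i (by omega)))
  obtain ⟨a, ha, x, hx, hL'_eq⟩ :=
    exists_eq_C_mul_prod_X_sub_C_of_alternating (m - 1) _ c hL' hc_lt hc_sign
  refine ⟨a, ha, x, fun i hi₁ hi₂ => ?_, fun y => by simp [hL'_eq, eval_prod]⟩
  have hc_last : c (m - 1) < t m := by
    simpa [Nat.sub_add_cancel hm] using (hc (m - 1) (by omega)).1.2
  obtain ⟨hx₀, hx₁⟩ := hx i (Finset.mem_Icc.2 ⟨hi₁, hi₂⟩)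
  exact ⟨(hc 0 (by omega)).1.1.trans_le hx₀, hx₁.trans_lt hc_last⟩
end

section
/- Let r ≥ 0 and n > max{r+1, 8}, set b := n^{−2}, and suppose τ, F are functions with ‖F − τ‖ ≤ (2b)^{r+1} (sup norm on ℝ), τ is (r+1) times differentiable, and there exists θ with |τ^{(r+1)}(θ)| ≥ 1/2. If T is a trigonometric polynomial of degree < n with T^{(r+1)}(θ) = 0 and τ is a trigonometric polynomial of degree ≤ r+1, then n^{r+1}·‖F − T‖ > 1/4. -/
/-- `T` is a (real) trigonometric polynomial of degree `< n`. -/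
def TrigPolyDegLT (n : ℕ) (T : ℝ → ℝ) : Prop :=
  ∃ a b : ℕ → ℝ, ∀ x : ℝ,
    T x = ∑ j ∈ Finset.range n, (a j * Real.cos (j * x) + b j * Real.sin (j * x))

/-!
The heart of the proof is Bernstein's inequality `‖p'‖ ≤ m ‖p‖` for real trigonometric
polynomials of degree `≤ m`, obtained from M. Riesz's interpolation formula
`4 m p'(x) = ∑_{k < 2m} (-1)^k / sin² (t_k / 2) · p (x + t_k)`, `t_k = (2k + 1) π / (2m)`,
whose weights have total mass `4 m²`. The weights are evaluated through the `2m`-th roots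
`u_k = exp (i t_k)` of `-1`.

Applied `r + 1` times to `τ - T`, which has degree `< n` and sup norm at most
`‖F - T‖ + (2b)^(r+1)`, Bernstein's inequality gives
`1/2 ≤ |(τ - T)^(r+1) θ| ≤ n^(r+1) ‖F - T‖ + (2/n)^(r+1)`, and `(2/n)^(r+1) ≤ 2/9 < 1/4`.
-/

open Finset Complex
open scoped Real

theorem Complex.exp_mul_I_sub_one_sq (t : ℝ) :
    (exp (t * I) - 1) ^ 2 = -4 * (Real.sin (t / 2) : ℂ) ^ 2 * exp (t * I) := by
  have h : (t : ℂ) = 2 * (t / 2 : ℝ) := by push_cast; ring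
  have hsc := Complex.sin_sq_add_cos_sq ((t / 2 : ℝ) : ℂ)
  rw [h, Complex.exp_mul_I, Complex.ofReal_sin, Complex.cos_two_mul, Complex.sin_two_mul]
  set s := Complex.sin ((t / 2 : ℝ) : ℂ)
  set c := Complex.cos ((t / 2 : ℝ) : ℂ)
  linear_combination (4 * s ^ 2 * c ^ 2) * Complex.I_sq
    + (4 * (c ^ 2 - 1 - s ^ 2) + 8 * s * c * I + 4 * s ^ 2) * hsc

noncomputable def rieszNode (m k : ℕ) : ℝ := (2 * k + 1) * π / (2 * m)

noncomputable def rieszWeight (m k : ℕ) : ℝ := (-1) ^ k / Real.sin (rieszNode m k / 2) ^ 2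

noncomputable def rieszRoot (m k : ℕ) : ℂ := exp (rieszNode m k * I)

section Riesz

variable {m : ℕ}

theorem rieszRoot_pow (k c : ℕ) :
    rieszRoot m k ^ c = exp ((c * rieszNode m k : ℝ) * I) := by
  rw [rieszRoot, ← Complex.exp_nat_mul]
  push_cast
  ring_nf

theorem rieszRoot_pow_self (hm : m ≠ 0) (k : ℕ) : rieszRoot m k ^ m = (-1) ^ k * I := by
  rw [rieszRoot_pow, show ((m * rieszNode m k : ℝ) : ℂ) * I = k * (π * I) + π / 2 * I by
      rw [rieszNode]; push_cast; field_simp,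
    Complex.exp_add, Complex.exp_nat_mul, Complex.exp_pi_mul_I, Complex.exp_pi_div_two_mul_I]

theorem rieszRoot_pow_two_mul (hm : m ≠ 0) (k : ℕ) : rieszRoot m k ^ (2 * m) = -1 := by
  rw [mul_comm, pow_mul, rieszRoot_pow_self hm, mul_pow, Complex.I_sq, ← pow_mul, mul_comm k,
    pow_mul, neg_one_sq, one_pow, one_mul]

theorem rieszRoot_ne_one (hm : m ≠ 0) (k : ℕ) : rieszRoot m k ≠ 1 := by
  intro h
  have := rieszRoot_pow_two_mul hm k
  rw [h, one_pow] at this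
  norm_num at this

theorem sum_rieszRoot_pow (hm : m ≠ 0) {c : ℕ} (hc0 : c ≠ 0) (hc : c < 2 * m) :
    ∑ k ∈ range (2 * m), rieszRoot m k ^ c = 0 := by
  set ω := exp (2 * π * I / (2 * m : ℕ))
  have hω : IsPrimitiveRoot ω (2 * m) := Complex.isPrimitiveRoot_exp _ (by omega)
  have hroot : ∀ k, rieszRoot m k = rieszRoot m 0 * ω ^ k := by
    intro k
    rw [← Complex.exp_nat_mul, rieszRoot, rieszRoot, ← Complex.exp_add, rieszNode, rieszNode]
    congr 1
    push_cast
    field_simp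
    ring
  have hne : ω ^ c ≠ 1 := hω.pow_ne_one_of_pos_of_lt hc0 hc
  have hgeom : ∑ k ∈ range (2 * m), (ω ^ c) ^ k = 0 := by
    have := geom_sum_mul (ω ^ c) (2 * m)
    rw [← pow_mul, mul_comm c, pow_mul, hω.pow_eq_one, one_pow, sub_self] at this
    exact (mul_eq_zero.mp this).resolve_right (sub_ne_zero.mpr hne)
  rw [sum_congr rfl fun k _ => by rw [hroot k, mul_pow, ← pow_mul, mul_comm k c, pow_mul],
    ← mul_sum, hgeom, mul_zero]

/- This sum and the next one are pinned down by a telescoping recursion in `c`, whose increments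
are the previous kind of sum, together with the sign change under `c ↦ c + 2m`
(as `u_k^(2m) = -1`). -/
theorem sum_rieszRoot_pow_div_sub_one (hm : m ≠ 0) {c : ℕ} (hc1 : 1 ≤ c) (hc : c ≤ 2 * m) :
    ∑ k ∈ range (2 * m), rieszRoot m k ^ c / (rieszRoot m k - 1) = m := by
  set R : ℕ → ℂ := fun c => ∑ k ∈ range (2 * m), rieszRoot m k ^ c / (rieszRoot m k - 1)
  have hstep : ∀ c, R (c + 1) = R c + ∑ k ∈ range (2 * m), rieszRoot m k ^ c := by
    intro c
    simp only [R, ← sum_add_distrib]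
    refine sum_congr rfl fun k _ => ?_
    have := sub_ne_zero.mpr (rieszRoot_ne_one hm k)
    field_simp
    ring
  have hanti : R (2 * m) = -R 0 := by
    simp only [R, rieszRoot_pow_two_mul hm, pow_zero, neg_div, sum_neg_distrib]
  have hconst : ∀ c, 1 ≤ c → c ≤ 2 * m → R c = R 0 + 2 * m := by
    intro c hc1
    induction c, hc1 using Nat.le_induction with
    | base => intro _; rw [hstep]; simp
    | succ c hc ih =>
      intro hc'
      rw [hstep, sum_rieszRoot_pow hm (by omega) (by omega), ih (by omega), add_zero]
  have h0 : R 0 = -m := by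
    have := hconst (2 * m) (by omega) le_rfl
    rw [hanti] at this
    linear_combination -this / 2
  change R c = m
  rw [hconst c hc1 hc, h0]
  ring

theorem sum_rieszRoot_pow_div_sub_one_sq (hm : m ≠ 0) {c : ℕ} (hc1 : 1 ≤ c)
    (hc : c ≤ 2 * m + 1) :
    ∑ k ∈ range (2 * m), rieszRoot m k ^ c / (rieszRoot m k - 1) ^ 2 = ((c : ℂ) - 1 - m) * m := by
  set S : ℕ → ℂ := fun c => ∑ k ∈ range (2 * m), rieszRoot m k ^ c / (rieszRoot m k - 1) ^ 2
  have hstep : ∀ c, S (c + 1) =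
      S c + ∑ k ∈ range (2 * m), rieszRoot m k ^ c / (rieszRoot m k - 1) := by
    intro c
    simp only [S, ← sum_add_distrib]
    refine sum_congr rfl fun k _ => ?_
    have := sub_ne_zero.mpr (rieszRoot_ne_one hm k)
    field_simp
    ring
  have hanti : S (2 * m + 1) = -S 1 := by
    simp only [S, pow_succ, rieszRoot_pow_two_mul hm, pow_zero, neg_one_mul, neg_div,
      sum_neg_distrib, one_mul]
  have hlin : ∀ c, 1 ≤ c → c ≤ 2 * m + 1 → S c = S 1 + (c - 1) * m := by
    intro c hc1
    induction c, hc1 using Nat.le_induction with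
    | base => intro _; simp
    | succ c hc ih =>
      intro hc'
      rw [hstep, sum_rieszRoot_pow_div_sub_one hm hc (by omega), ih (by omega)]
      push_cast
      ring
  have h1 : S 1 = -m ^ 2 := by
    have := hlin (2 * m + 1) (by omega) le_rfl
    rw [hanti] at this
    push_cast at this
    linear_combination -this / 2
  change S c = _
  rw [hlin c hc1 hc, h1]
  ring

theorem rieszWeight_mul_exp (hm : m ≠ 0) (k j : ℕ) :
    (rieszWeight m k : ℂ) * exp ((j * rieszNode m k : ℝ) * I) =
      4 * I * (rieszRoot m k ^ (m + j + 1) / (rieszRoot m k - 1) ^ 2) := by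
  have hsq := Complex.exp_mul_I_sub_one_sq (rieszNode m k)
  have hne : (rieszRoot m k - 1) ^ 2 ≠ 0 :=
    pow_ne_zero 2 (sub_ne_zero.mpr (rieszRoot_ne_one hm k))
  rw [← rieszRoot] at hsq
  rw [← rieszRoot_pow, rieszWeight, Complex.ofReal_div, Complex.ofReal_pow, Complex.ofReal_pow,
    Complex.ofReal_neg, Complex.ofReal_one, hsq]
  rw [hsq] at hne
  have hs : (Real.sin (rieszNode m k / 2) : ℂ) ≠ 0 := by
    rintro hs; simp [hs] at hne
  have hu : rieszRoot m k ≠ 0 := Complex.exp_ne_zero _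
  have hsign : ((-1) ^ k : ℂ) = -I * rieszRoot m k ^ m := by
    rw [rieszRoot_pow_self hm]
    linear_combination ((-1 : ℂ) ^ k) * Complex.I_sq
  rw [hsign]
  field_simp
  ring

theorem sum_rieszWeight_mul_exp_add (hm : m ≠ 0) {j : ℕ} (hj : j ≤ m) (x : ℝ) :
    ∑ k ∈ range (2 * m), (rieszWeight m k : ℂ) * exp ((j * (x + rieszNode m k) : ℝ) * I) =
      (4 * m * j : ℝ) * (I * exp ((j * x : ℝ) * I)) := by
  have hsplit : ∀ k, exp ((j * (x + rieszNode m k) : ℝ) * I) =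
      exp ((j * x : ℝ) * I) * exp ((j * rieszNode m k : ℝ) * I) := by
    intro k; rw [← Complex.exp_add]; push_cast; ring_nf
  simp only [hsplit, mul_left_comm _ (exp ((j * x : ℝ) * I)), ← mul_sum, rieszWeight_mul_exp hm,
    sum_rieszRoot_pow_div_sub_one_sq hm (c := m + j + 1) (by omega) (by omega)]
  push_cast
  ring

theorem sum_rieszWeight_mul_cos_add (hm : m ≠ 0) {j : ℕ} (hj : j ≤ m) (x : ℝ) :
    ∑ k ∈ range (2 * m), rieszWeight m k * Real.cos (j * (x + rieszNode m k)) =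
      4 * m * -(j * Real.sin (j * x)) := by
  have h := congrArg Complex.re (sum_rieszWeight_mul_exp_add hm hj x)
  simp only [Complex.re_sum, Complex.re_ofReal_mul, Complex.exp_ofReal_mul_I_re,
    Complex.I_mul_re, Complex.exp_ofReal_mul_I_im] at h
  rw [h]
  ring

theorem sum_rieszWeight_mul_sin_add (hm : m ≠ 0) {j : ℕ} (hj : j ≤ m) (x : ℝ) :
    ∑ k ∈ range (2 * m), rieszWeight m k * Real.sin (j * (x + rieszNode m k)) =
      4 * m * (j * Real.cos (j * x)) := by
  have h := congrArg Complex.im (sum_rieszWeight_mul_exp_add hm hj x)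
  simp only [Complex.im_sum, Complex.im_ofReal_mul, Complex.exp_ofReal_mul_I_im,
    Complex.I_mul_im, Complex.exp_ofReal_mul_I_re] at h
  rw [h]
  ring

theorem sum_abs_rieszWeight (hm : m ≠ 0) :
    ∑ k ∈ range (2 * m), |rieszWeight m k| = 4 * m ^ 2 := by
  have hsin : ∀ k, Real.sin (m * rieszNode m k) = (-1) ^ k := by
    intro k
    rw [rieszNode, show (m : ℝ) * ((2 * k + 1) * π / (2 * m)) = k * π + π / 2 by
      field_simp, Real.sin_add_pi_div_two, Real.cos_nat_mul_pi]
  have habs : ∀ k, |rieszWeight m k| = rieszWeight m k * (-1) ^ k := by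
    intro k
    rw [rieszWeight, abs_div, abs_neg_one_pow, abs_of_nonneg (sq_nonneg _), div_mul_eq_mul_div,
      ← pow_add, ← two_mul, pow_mul, neg_one_sq, one_pow]
  have h := sum_rieszWeight_mul_sin_add hm le_rfl 0
  simp only [zero_add, hsin, mul_zero, Real.cos_zero, mul_one] at h
  rw [sum_congr rfl fun k _ => habs k, h]
  ring

end Riesz

noncomputable def trigPoly (n : ℕ) (a b : ℕ → ℝ) (x : ℝ) : ℝ :=
  ∑ j ∈ range n, (a j * Real.cos (j * x) + b j * Real.sin (j * x))

theorem trigPolyDegLT_iff {n : ℕ} {p : ℝ → ℝ} :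
    TrigPolyDegLT n p ↔ ∃ a b, p = trigPoly n a b :=
  ⟨fun ⟨a, b, h⟩ => ⟨a, b, funext h⟩, fun ⟨a, b, h⟩ => ⟨a, b, fun x => by rw [h, trigPoly]⟩⟩

theorem hasDerivAt_trigPoly (n : ℕ) (a b : ℕ → ℝ) (x : ℝ) :
    HasDerivAt (trigPoly n a b) (trigPoly n (fun j => j * b j) (fun j => -(j * a j)) x) x := by
  unfold trigPoly
  refine HasDerivAt.fun_sum fun j _ => ?_
  have hj : HasDerivAt (fun y : ℝ => (j : ℝ) * y) (j * 1) x := (hasDerivAt_id x).const_mul _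
  refine ((hj.cos.const_mul (a j)).add (hj.sin.const_mul (b j))).congr_deriv ?_
  ring

theorem deriv_trigPoly (n : ℕ) (a b : ℕ → ℝ) :
    deriv (trigPoly n a b) = trigPoly n (fun j => j * b j) (fun j => -(j * a j)) :=
  funext fun x => (hasDerivAt_trigPoly n a b x).deriv

theorem abs_trigPoly_le (n : ℕ) (a b : ℕ → ℝ) (x : ℝ) :
    |trigPoly n a b x| ≤ ∑ j ∈ range n, (|a j| + |b j|) := by
  refine (abs_sum_le_sum_abs _ _).trans (sum_le_sum fun j _ => (abs_add_le _ _).trans ?_)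
  rw [abs_mul, abs_mul]
  gcongr
  · exact mul_le_of_le_one_right (abs_nonneg _) (Real.abs_cos_le_one _)
  · exact mul_le_of_le_one_right (abs_nonneg _) (Real.abs_sin_le_one _)

theorem sum_rieszWeight_mul_trigPoly {m : ℕ} (hm : m ≠ 0) (a b : ℕ → ℝ) (x : ℝ) :
    ∑ k ∈ range (2 * m), rieszWeight m k * trigPoly (m + 1) a b (x + rieszNode m k) =
      4 * m * trigPoly (m + 1) (fun j => j * b j) (fun j => -(j * a j)) x := by
  simp only [trigPoly, mul_sum]
  rw [sum_comm]
  refine sum_congr rfl fun j hj => ?_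
  have hjm : j ≤ m := Nat.lt_succ_iff.mp (mem_range.mp hj)
  have hsplit : ∀ k, rieszWeight m k * (a j * Real.cos (j * (x + rieszNode m k)) +
      b j * Real.sin (j * (x + rieszNode m k))) =
      a j * (rieszWeight m k * Real.cos (j * (x + rieszNode m k))) +
        b j * (rieszWeight m k * Real.sin (j * (x + rieszNode m k))) := fun k => by ring
  rw [sum_congr rfl fun k _ => hsplit k, sum_add_distrib, ← mul_sum, ← mul_sum,
    sum_rieszWeight_mul_cos_add hm hjm x, sum_rieszWeight_mul_sin_add hm hjm x]
  ring

namespace TrigPolyDegLT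

variable {n : ℕ} {p q : ℝ → ℝ}

theorem mono {n' : ℕ} (h : n ≤ n') (hp : TrigPolyDegLT n p) : TrigPolyDegLT n' p := by
  obtain ⟨a, b, hp⟩ := hp
  refine ⟨fun j => if j < n then a j else 0, fun j => if j < n then b j else 0, fun x => ?_⟩
  rw [hp, ← sum_range_add_sum_Ico _ h, sum_eq_zero (s := Ico n n') fun j hj => ?_, add_zero]
  · exact sum_congr rfl fun j hj => by simp [mem_range.mp hj]
  · simp [(mem_Ico.mp hj).1.not_gt]

theorem sub (hp : TrigPolyDegLT n p) (hq : TrigPolyDegLT n q) : TrigPolyDegLT n (p - q) := by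
  obtain ⟨a, b, hp⟩ := hp
  obtain ⟨a', b', hq⟩ := hq
  refine ⟨a - a', b - b', fun x => ?_⟩
  simp only [Pi.sub_apply, hp, hq, ← sum_sub_distrib]
  exact sum_congr rfl fun j _ => by ring

theorem deriv (hp : TrigPolyDegLT n p) : TrigPolyDegLT n (_root_.deriv p) := by
  obtain ⟨a, b, rfl⟩ := trigPolyDegLT_iff.mp hp
  exact trigPolyDegLT_iff.mpr ⟨_, _, deriv_trigPoly n a b⟩

theorem iteratedDeriv (hp : TrigPolyDegLT n p) (s : ℕ) :
    TrigPolyDegLT n (_root_.iteratedDeriv s p) := by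
  induction s with
  | zero => simpa using hp
  | succ s ih => simpa only [iteratedDeriv_succ] using ih.deriv

theorem contDiff (hp : TrigPolyDegLT n p) {k : WithTop ℕ∞} : ContDiff ℝ k p := by
  obtain ⟨a, b, rfl⟩ := trigPolyDegLT_iff.mp hp
  unfold trigPoly
  fun_prop

theorem exists_abs_le (hp : TrigPolyDegLT n p) : ∃ C, ∀ x, |p x| ≤ C := by
  obtain ⟨a, b, rfl⟩ := trigPolyDegLT_iff.mp hp
  exact ⟨_, abs_trigPoly_le n a b⟩

theorem abs_deriv_le {m : ℕ} {C : ℝ} (hp : TrigPolyDegLT (m + 1) p) (hC : ∀ x, |p x| ≤ C)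
    (x : ℝ) : |_root_.deriv p x| ≤ m * C := by
  obtain ⟨a, b, rfl⟩ := trigPolyDegLT_iff.mp hp
  rcases eq_or_ne m 0 with rfl | hm
  · simp [deriv_trigPoly, trigPoly]
  have h4m : (0 : ℝ) < 4 * m := by positivity
  rw [deriv_trigPoly, ← mul_le_mul_iff_of_pos_left h4m, ← abs_of_pos h4m, ← abs_mul,
    ← sum_rieszWeight_mul_trigPoly hm, abs_of_pos h4m]
  calc |∑ k ∈ range (2 * m), rieszWeight m k * trigPoly (m + 1) a b (x + rieszNode m k)|
      ≤ ∑ k ∈ range (2 * m), |rieszWeight m k| * C := by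
        refine (abs_sum_le_sum_abs _ _).trans (sum_le_sum fun k _ => ?_)
        rw [abs_mul]
        exact mul_le_mul_of_nonneg_left (hC _) (abs_nonneg _)
    _ = 4 * m * (m * C) := by rw [← sum_mul, sum_abs_rieszWeight hm]; ring

theorem abs_iteratedDeriv_le {m : ℕ} {C : ℝ} (hp : TrigPolyDegLT (m + 1) p)
    (hC : ∀ x, |p x| ≤ C) (s : ℕ) (x : ℝ) : |_root_.iteratedDeriv s p x| ≤ m ^ s * C := by
  induction s generalizing x with
  | zero => simpa using hC x
  | succ s ih =>
    rw [iteratedDeriv_succ, pow_succ', mul_assoc]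
    exact (hp.iteratedDeriv s).abs_deriv_le ih x

end TrigPolyDegLT

theorem pow_mul_two_mul_inv_sq_pow_le {x : ℝ} (hx : 9 ≤ x) {s : ℕ} (hs : s ≠ 0) :
    x ^ s * (2 * (x ^ 2)⁻¹) ^ s ≤ 2 / 9 := by
  rw [← mul_pow, show x * (2 * (x ^ 2)⁻¹) = 2 / x by field_simp]
  calc (2 / x) ^ s ≤ 2 / x :=
        pow_le_of_le_one (by positivity) (by rw [div_le_one (by positivity)]; linarith) hs
    _ ≤ 2 / 9 := by gcongr

theorem stmt19 (r n : ℕ) (hn1 : r + 1 < n) (hn2 : 8 < n)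
    (τ F T : ℝ → ℝ) (θ : ℝ)
    (hτpoly : TrigPolyDegLT (r + 2) τ)
    (hFτ : ∀ x : ℝ, |F x - τ x| ≤ (2 * ((n : ℝ) ^ 2)⁻¹) ^ (r + 1))
    (hτθ : (1 : ℝ) / 2 ≤ |iteratedDeriv (r + 1) τ θ|)
    (hTpoly : TrigPolyDegLT n T)
    (hTθ : iteratedDeriv (r + 1) T θ = 0) :
    (1 : ℝ) / 4 < (n : ℝ) ^ (r + 1) * ⨆ x : ℝ, |F x - T x| := by
  obtain ⟨m, rfl⟩ : ∃ m, n = m + 1 := ⟨n - 1, by omega⟩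
  have hτ : TrigPolyDegLT (m + 1) τ := hτpoly.mono (by omega)
  have hdiff : TrigPolyDegLT (m + 1) (τ - T) := hτ.sub hTpoly
  set ε : ℝ := (2 * (((m + 1 : ℕ) : ℝ) ^ 2)⁻¹) ^ (r + 1)
  set M := ⨆ x : ℝ, |F x - T x|
  have hM : ∀ x, |F x - T x| ≤ M := by
    obtain ⟨C, hC⟩ := hdiff.exists_abs_le
    refine le_ciSup ⟨ε + C, ?_⟩
    rintro _ ⟨x, rfl⟩
    simp only [Pi.sub_apply] at hC
    linarith [abs_sub_le (F x) (τ x) (T x), hFτ x, hC x]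
  have hbound : ∀ x, |(τ - T) x| ≤ ε + M := fun x => by
    rw [Pi.sub_apply]
    linarith [abs_sub_le (τ x) (F x) (T x), abs_sub_comm (τ x) (F x), hFτ x, hM x]
  have hbern := hdiff.abs_iteratedDeriv_le hbound (r + 1) θ
  rw [iteratedDeriv_sub hτ.contDiff.contDiffAt hTpoly.contDiff.contDiffAt, hTθ, sub_zero] at hbern
  have hεM : 0 ≤ ε + M := (abs_nonneg _).trans (hbound 0)
  have hε := pow_mul_two_mul_inv_sq_pow_le (x := ((m + 1 : ℕ) : ℝ)) (by exact_mod_cast hn2)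
    (s := r + 1) (by omega)
  calc (1 : ℝ) / 4 < 1 / 2 - 2 / 9 := by norm_num
    _ ≤ |iteratedDeriv (r + 1) τ θ| - ((m + 1 : ℕ) : ℝ) ^ (r + 1) * ε := by linarith
    _ ≤ (m : ℝ) ^ (r + 1) * (ε + M) - ((m + 1 : ℕ) : ℝ) ^ (r + 1) * ε := by linarith
    _ ≤ ((m + 1 : ℕ) : ℝ) ^ (r + 1) * (ε + M) - ((m + 1 : ℕ) : ℝ) ^ (r + 1) * ε := by
        gcongr; linarith
    _ = ((m + 1 : ℕ) : ℝ) ^ (r + 1) * M := by ring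
end
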